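/- Let z', x̄, ȳ ∈ ℝ^d with z' a unit vector. Suppose z* is a unit vector satisfying ȳ·z* = x̄·z* and maximizing z*·z' among all unit vectors with that constraint. If x̄ ≠ ȳ and z' is not in the span of (ȳ − x̄), then z* is the normalized orthogonal projection of z' onto the hyperplane {v : (ȳ − x̄)·v = 0}; i.e., z* = w/‖w‖ where w = z' − ((ȳ − x̄)·z' / ‖ȳ − x̄‖²)(ȳ − x̄). -/

import Mathlib

/-!
On the unit vectors of a subspace `K`, the functional `u ↦ ⟪u, z⟫` agrees with `u ↦ ⟪u, p⟫`,
where `p` is the orthogonal projection of `z` onto `K`; by Cauchy–Schwarz its unique maximiser is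
`p / ‖p‖` as soon as `p ≠ 0`. The fairness constraint `⟪y, u⟫ = ⟪x, u⟫` says exactly that `u` lies
in the hyperplane `K = (ℝ ∙ (y - x))ᗮ`, whose projection is the stated formula for `w`, and `p ≠ 0`
because `Kᗮ = ℝ ∙ (y - x)` does not contain `z'`.
-/

open scoped RealInnerProductSpace

namespace Submodule

variable {E : Type*} [NormedAddCommGroup E] [InnerProductSpace ℝ E]

theorem eq_inv_norm_smul_starProjection_of_forall_inner_le {K : Submodule ℝ E}
    [K.HasOrthogonalProjection] {z v : E} (hvK : v ∈ K) (hv : ‖v‖ = 1)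
    (hmax : ∀ u ∈ K, ‖u‖ = 1 → ⟪u, z⟫ ≤ ⟪v, z⟫) (hz : z ∉ Kᗮ) :
    v = ‖K.starProjection z‖⁻¹ • K.starProjection z := by
  set p := K.starProjection z
  have hp : ‖p‖ ≠ 0 := norm_ne_zero_iff.mpr (mt K.starProjection_apply_eq_zero_iff.mp hz)
  have hunit : ‖‖p‖⁻¹ • p‖ = 1 := norm_smul_inv_norm (norm_ne_zero_iff.mp hp)
  have hunitK : ‖p‖⁻¹ • p ∈ K := K.smul_mem _ (K.starProjection_apply_mem z)
  have inner_eq {u : E} (hu : u ∈ K) : ⟪u, z⟫ = ⟪u, p⟫ := by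
    rw [← inner_starProjection_left_eq_right, starProjection_eq_self_iff.mpr hu]
  have one_le_inner : 1 ≤ ⟪v, ‖p‖⁻¹ • p⟫ := by
    have := hmax _ hunitK hunit
    rw [inner_eq hvK, inner_eq hunitK, real_inner_smul_left, real_inner_self_eq_norm_sq, sq,
      inv_mul_cancel_left₀ hp] at this
    rwa [real_inner_smul_right, le_inv_mul_iff₀ (by positivity), mul_one]
  refine (inner_eq_one_iff_of_norm_eq_one hv hunit).mp (le_antisymm ?_ one_le_inner)
  simpa [hv, hunit] using real_inner_le_norm v (‖p‖⁻¹ • p)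

theorem starProjection_orthogonal_singleton (a z : E) :
    (ℝ ∙ a)ᗮ.starProjection z = z - (⟪a, z⟫ / ‖a‖ ^ 2) • a := by
  rw [starProjection_orthogonal_val, starProjection_singleton]
  rfl

theorem mem_orthogonal_singleton_sub_iff {x y u : E} :
    u ∈ (ℝ ∙ (y - x))ᗮ ↔ ⟪y, u⟫ = ⟪x, u⟫ := by
  rw [mem_orthogonal_singleton_iff_inner_right, inner_sub_left, sub_eq_zero]

end Submodule

theorem stmt_5_general {d : ℕ} (z' x y zstar : EuclideanSpace ℝ (Fin d))
    (hzs : ‖zstar‖ = 1)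
    (hfair : ⟪y, zstar⟫ = ⟪x, zstar⟫)
    (hopt : ∀ u : EuclideanSpace ℝ (Fin d), ‖u‖ = 1 → ⟪y, u⟫ = ⟪x, u⟫ →
      ⟪u, z'⟫ ≤ ⟪zstar, z'⟫)
    (hspan : z' ∉ Submodule.span ℝ {y - x})
    (w : EuclideanSpace ℝ (Fin d))
    (hw : w = z' - (⟪y - x, z'⟫ / ‖y - x‖ ^ 2) • (y - x)) :
    zstar = ‖w‖⁻¹ • w := by
  rw [hw, ← Submodule.starProjection_orthogonal_singleton]
  refine Submodule.eq_inv_norm_smul_starProjection_of_forall_inner_le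
    (Submodule.mem_orthogonal_singleton_sub_iff.mpr hfair) hzs
    (fun u hu hu1 ↦ hopt u hu1 (Submodule.mem_orthogonal_singleton_sub_iff.mp hu)) ?_
  rwa [Submodule.orthogonal_orthogonal]

theorem stmt_5 {d : ℕ} (z' x y zstar : EuclideanSpace ℝ (Fin d))
    (hz' : ‖z'‖ = 1) (hzs : ‖zstar‖ = 1)
    (hfair : ⟪y, zstar⟫ = ⟪x, zstar⟫)
    (hopt : ∀ u : EuclideanSpace ℝ (Fin d), ‖u‖ = 1 → ⟪y, u⟫ = ⟪x, u⟫ →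
      ⟪u, z'⟫ ≤ ⟪zstar, z'⟫)
    (hxy : x ≠ y)
    (hspan : z' ∉ Submodule.span ℝ {y - x})
    (w : EuclideanSpace ℝ (Fin d))
    (hw : w = z' - (⟪y - x, z'⟫ / ‖y - x‖ ^ 2) • (y - x)) :
    zstar = ‖w‖⁻¹ • w :=
  stmt_5_general z' x y zstar hzs hfair hopt hspan w hw
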